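/- arXiv:2603.30039 — 2 statements merged into one kernel-verified Lean document; each statement's English description precedes it below -/
import Mathlib

section
/- Let H(C) := 4φ(C)² − 4Φ(−C) + 1. Then there is a unique C ∈ (0,1) with H(C) = 0 (numerically C* ≈ 0.25573). -/
open MeasureTheory

/-- The standard Gaussian density `φ(x) = (1/√(2π)) e^{-x²/2}`. -/
noncomputable def gphi (x : ℝ) : ℝ := (Real.sqrt (2 * Real.pi))⁻¹ * Real.exp (-(x ^ 2) / 2)

/-- The standard Gaussian CDF `Φ(x) = ∫_{-∞}^x φ(t) dt`. -/
noncomputable def gPhi (x : ℝ) : ℝ := ∫ t in Set.Iic x, gphi t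

/-- The standard Gaussian measure on `ℝ^{n+1}`. -/
noncomputable def gauss (n : ℕ) : Measure (Fin (n + 1) → ℝ) :=
  Measure.pi fun _ => ProbabilityTheory.gaussianReal 0 1

/-- The multivariate probabilists' Hermite polynomial `He_α(x) = ∏ᵢ He_{αᵢ}(xᵢ)`. -/
noncomputable def hermiteProd {m : ℕ} (α : Fin m → ℕ) (x : Fin m → ℝ) : ℝ :=
  ∏ i, Polynomial.aeval (x i) (Polynomial.hermite (α i))

/-- The factorial of a multi-index, `α! = ∏ᵢ αᵢ!`. -/
def mfact {m : ℕ} (α : Fin m → ℕ) : ℕ := ∏ i, Nat.factorial (α i)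

/-- A Davie–Reeds strip pair in direction `x₁`, up to a `γ`-null set. -/
def StripPair (n : ℕ) (Cstar : ℝ) (f g : (Fin (n + 1) → ℝ) → ℝ) : Prop :=
  ∀ᵐ x ∂(gauss n),
    (Cstar ≤ x 0 → f x = 1 ∧ g x = 1) ∧
    (x 0 ≤ -Cstar → f x = -1 ∧ g x = -1) ∧
    (|x 0| < Cstar → g x = -f x)

lemma gphi_cont : Continuous gphi := by
  unfold gphi; fun_prop

lemma gphi_pos (x : ℝ) : 0 < gphi x := by
  unfold gphi
  positivity

lemma gphi_even (x : ℝ) : gphi (-x) = gphi x := by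
  unfold gphi; ring_nf

lemma gphi_integrable : Integrable gphi := by
  have h : Integrable fun x : ℝ => Real.exp (-(1/2) * x ^ 2) :=
    integrable_exp_neg_mul_sq (by norm_num)
  have : Integrable fun x : ℝ => (Real.sqrt (2 * Real.pi))⁻¹ * Real.exp (-(1/2) * x ^ 2) :=
    h.const_mul _
  convert this using 2 with x
  unfold gphi
  ring_nf

lemma gphi_total : ∫ x, gphi x = 1 := by
  unfold gphi
  rw [MeasureTheory.integral_const_mul]
  have : ∀ x : ℝ, Real.exp (-(x ^ 2) / 2) = Real.exp (-(1/2) * x ^ 2) := by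
    intro x; ring_nf
  simp_rw [this]
  rw [integral_gaussian]
  rw [show Real.pi / (1/2) = 2 * Real.pi by ring]
  rw [inv_mul_cancel₀]
  positivity

lemma gPhi_zero : gPhi 0 = 1 / 2 := by
  have hsymm : (∫ t in Set.Iic (0:ℝ), gphi t) = ∫ t in Set.Ioi (0:ℝ), gphi t := by
    have h := integral_comp_neg_Iic (0:ℝ) gphi
    simp_rw [gphi_even, neg_zero] at h
    exact h
  have hsum : (∫ t in Set.Iic (0:ℝ), gphi t) + ∫ t in Set.Ioi (0:ℝ), gphi t = 1 := by
    rw [intervalIntegral.integral_Iic_add_Ioi gphi_integrable.integrableOn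
      gphi_integrable.integrableOn, gphi_total]
  unfold gPhi
  linarith [hsymm, hsum]

lemma gPhi_diff (a b : ℝ) : gPhi b - gPhi a = ∫ t in a..b, gphi t :=
  intervalIntegral.integral_Iic_sub_Iic gphi_integrable.integrableOn gphi_integrable.integrableOn

lemma gPhi_hasDeriv (x : ℝ) : HasDerivAt gPhi (gphi x) x := by
  have h : HasDerivAt (fun u => ∫ t in (0:ℝ)..u, gphi t) (gphi x) x :=
    intervalIntegral.integral_hasDerivAt_right
      (gphi_cont.intervalIntegrable _ _)
      (gphi_cont.aestronglyMeasurable.stronglyMeasurableAtFilter)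
      gphi_cont.continuousAt
  have : ∀ u, gPhi u = gPhi 0 + ∫ t in (0:ℝ)..u, gphi t := by
    intro u; rw [← gPhi_diff]; ring
  have h2 := (h.const_add (gPhi 0))
  rw [show gPhi = fun u => gPhi 0 + ∫ t in (0:ℝ)..u, gphi t from funext this]
  exact h2

lemma gphi_hasDeriv (x : ℝ) : HasDerivAt gphi (-x * gphi x) x := by
  have h1 : HasDerivAt (fun x : ℝ => -(x ^ 2) / 2) (-x) x := by
    have := (hasDerivAt_pow 2 x)
    have h := ((this.neg).div_const 2)
    exact h.congr_deriv (by norm_num [pow_one]; ring)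
  have h2 := (h1.exp).const_mul (Real.sqrt (2 * Real.pi))⁻¹
  exact h2.congr_deriv (by unfold gphi; ring)

noncomputable def Hfun (C : ℝ) : ℝ := 4 * gphi C ^ 2 - 4 * gPhi (-C) + 1

lemma Hfun_hasDeriv (C : ℝ) :
    HasDerivAt Hfun (4 * gphi C * (1 - 2 * C * gphi C)) C := by
  have h1 : HasDerivAt (fun C => 4 * gphi C ^ 2) (4 * (2 * gphi C * (-C * gphi C))) C := by
    exact ((gphi_hasDeriv C).pow 2 |>.const_mul 4).congr_deriv (by push_cast; ring)
  have h2 : HasDerivAt (fun C : ℝ => gPhi (-C)) (-gphi C) C := by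
    have := (gPhi_hasDeriv (-C)).comp C (hasDerivAt_neg C)
    simp only [gphi_even, mul_neg, mul_one] at this
    exact this
  have h3 := (h1.sub (h2.const_mul 4)).add_const 1
  have heq : (fun x => 4 * gphi x ^ 2 - 4 * gPhi (-x) + 1) = Hfun := rfl
  exact h3.congr_deriv (by ring)

lemma sqrt_two_pi_gt_two : (2:ℝ) < Real.sqrt (2 * Real.pi) := by
  have : (4:ℝ) < 2 * Real.pi := by nlinarith [Real.pi_gt_three]
  nlinarith [Real.sq_sqrt (by positivity : (0:ℝ) ≤ 2 * Real.pi),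
    Real.sqrt_nonneg (2 * Real.pi)]

lemma gphi_le (x : ℝ) : gphi x ≤ (Real.sqrt (2 * Real.pi))⁻¹ := by
  unfold gphi
  have h1 : Real.exp (-(x ^ 2) / 2) ≤ 1 := by
    rw [Real.exp_le_one_iff]
    nlinarith [sq_nonneg x]
  nlinarith [inv_pos.mpr (lt_trans two_pos sqrt_two_pi_gt_two), h1,
    Real.exp_pos (-(x ^ 2) / 2)]

lemma Hfun_deriv_pos {C : ℝ} (h0 : 0 ≤ C) (h1 : C ≤ 1) :
    0 < 4 * gphi C * (1 - 2 * C * gphi C) := by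
  have hle := gphi_le C
  have hp := gphi_pos C
  have hs := sqrt_two_pi_gt_two
  have hinv : (Real.sqrt (2 * Real.pi))⁻¹ < 1/2 := by
    rw [inv_lt_iff_one_lt_mul₀ (by linarith)]
    linarith
  have : 2 * C * gphi C < 1 := by nlinarith
  nlinarith

lemma Hfun_strictMono : StrictMonoOn Hfun (Set.Icc 0 1) := by
  apply strictMonoOn_of_deriv_pos (convex_Icc 0 1)
  · exact fun x _ => ((Hfun_hasDeriv x).continuousAt).continuousWithinAt
  · intro x hx
    rw [interior_Icc] at hx
    rw [(Hfun_hasDeriv x).deriv]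
    exact Hfun_deriv_pos hx.1.le hx.2.le

lemma Hfun_zero_neg : Hfun 0 < 0 := by
  unfold Hfun
  rw [neg_zero, gPhi_zero]
  have : gphi 0 ^ 2 = (2 * Real.pi)⁻¹ := by
    unfold gphi
    rw [show -((0:ℝ) ^ 2) / 2 = 0 by norm_num, Real.exp_zero, mul_one]
    rw [← Real.sqrt_inv]
    exact Real.sq_sqrt (by positivity)
  rw [this]
  have hpi : (3:ℝ) < Real.pi := Real.pi_gt_three
  have : (2 * Real.pi)⁻¹ < 1/4 := by
    rw [inv_lt_iff_one_lt_mul₀ (by linarith)]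
    linarith
  linarith

lemma gPhi_neg_one_le : gPhi (-1) ≤ 1/4 := by
  have hdiff : gPhi 0 - gPhi (-1) = ∫ t in (-1:ℝ)..0, gphi t := gPhi_diff (-1) 0
  have hlow : (Real.sqrt (2 * Real.pi))⁻¹ * (5/6) ≤ ∫ t in (-1:ℝ)..0, gphi t := by
    have hmono : (∫ t in (-1:ℝ)..0, (Real.sqrt (2 * Real.pi))⁻¹ * (1 - t ^ 2 / 2))
        ≤ ∫ t in (-1:ℝ)..0, gphi t := by
      apply intervalIntegral.integral_mono_on (by norm_num)
      · exact (by fun_prop : Continuous fun t : ℝ =>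
          (Real.sqrt (2 * Real.pi))⁻¹ * (1 - t ^ 2 / 2)).intervalIntegrable _ _
      · exact gphi_cont.intervalIntegrable _ _
      · intro t _
        unfold gphi
        have h := Real.add_one_le_exp (-(t ^ 2) / 2)
        have hs : (0:ℝ) < (Real.sqrt (2 * Real.pi))⁻¹ :=
          inv_pos.mpr (lt_trans two_pos sqrt_two_pi_gt_two)
        nlinarith
    have hval : (∫ t in (-1:ℝ)..0, (Real.sqrt (2 * Real.pi))⁻¹ * (1 - t ^ 2 / 2))
        = (Real.sqrt (2 * Real.pi))⁻¹ * (5/6) := by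
      rw [intervalIntegral.integral_const_mul]
      congr 1
      rw [intervalIntegral.integral_sub intervalIntegrable_const
        (((continuous_pow 2).div_const 2).intervalIntegrable _ _)]
      simp only [intervalIntegral.integral_div, integral_pow]
      rw [intervalIntegral.integral_const]
      norm_num
    linarith
  have hq : (1:ℝ)/4 ≤ (Real.sqrt (2 * Real.pi))⁻¹ * (5/6) := by
    have h4 : Real.sqrt (2 * Real.pi) ≤ 10/3 := by
      rw [show (10:ℝ)/3 = Real.sqrt ((10/3)^2) by rw [Real.sqrt_sq]; norm_num]
      apply Real.sqrt_le_sqrt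
      nlinarith [Real.pi_le_four]
    have hs : (0:ℝ) < Real.sqrt (2 * Real.pi) := lt_trans two_pos sqrt_two_pi_gt_two
    have hinv := inv_anti₀ hs h4
    have : ((10:ℝ)/3)⁻¹ = 3/10 := by norm_num
    nlinarith
  rw [gPhi_zero] at hdiff
  linarith

lemma Hfun_one_pos : 0 < Hfun 1 := by
  unfold Hfun
  have := gPhi_neg_one_le
  nlinarith [gphi_pos 1]

/-- There is a unique `C ∈ (0,1)` with `H(C) = 4φ(C)² − 4Φ(−C) + 1 = 0`. -/
theorem unique_root_H :
    ∃! C : ℝ, C ∈ Set.Ioo (0 : ℝ) 1 ∧ 4 * gphi C ^ 2 - 4 * gPhi (-C) + 1 = 0 := by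
  have hcont : ContinuousOn Hfun (Set.Icc 0 1) :=
    fun x _ => ((Hfun_hasDeriv x).continuousAt).continuousWithinAt
  have hmem : (0:ℝ) ∈ Set.Ioo (Hfun 0) (Hfun 1) := ⟨Hfun_zero_neg, Hfun_one_pos⟩
  obtain ⟨C, hC, hHC⟩ := intermediate_value_Ioo (by norm_num : (0:ℝ) ≤ 1) hcont hmem
  refine ⟨C, ⟨hC, by exact hHC⟩, ?_⟩
  rintro D ⟨hD, hHD⟩
  have hCmem : C ∈ Set.Icc (0:ℝ) 1 := ⟨hC.1.le, hC.2.le⟩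
  have hDmem : D ∈ Set.Icc (0:ℝ) 1 := ⟨hD.1.le, hD.2.le⟩
  have h : Hfun D = Hfun C := by rw [hHC]; exact hHD
  exact Hfun_strictMono.injOn hDmem hCmem h
end

section
/- There exist measurable functions f, g : ℝ → {−1, 1} forming a Davie–Reeds strip pair in direction x₁ (with n = 1) such that ∫_ℝ x·f(x)·1_{|x| ≤ C*}·φ(x) dx = 0. Concretely, there exists b ∈ (0, C*) such that the odd square wave f with f(x) = sign(x) for |x| ≥ b and f(x) = −sign(x) for |x| < b, together with g defined by g = f outside the strip |x| ≤ C* and g = −f inside it, has this property. -/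
open MeasureTheory

lemma gphi_deriv (x : ℝ) : HasDerivAt (fun y => -gphi y) (x * gphi x) x := by
  have h1 : HasDerivAt (fun y : ℝ => -(y ^ 2) / 2) (-x) x := by
    have := ((hasDerivAt_pow 2 x).neg).div_const 2
    simpa using this.congr_deriv (by push_cast; ring)
  have h2 : HasDerivAt (fun y => -gphi y) _ x := ((h1.exp).const_mul ((Real.sqrt (2 * Real.pi))⁻¹)).neg
  convert h2 using 1
  simp [gphi]; ring

lemma gphi_int (a b : ℝ) : ∫ x in a..b, x * gphi x = gphi a - gphi b := by
  rw [intervalIntegral.integral_eq_sub_of_hasDerivAt (fun x _ => gphi_deriv x)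
    ((Continuous.intervalIntegrable (by unfold gphi; fun_prop) a b))]
  ring

/-- There exists a one-dimensional "square wave" Davie–Reeds strip pair whose restriction
to the strip has vanishing degree-1 Hermite coefficient. -/
theorem exists_square_wave_optimizer
    (Cstar : ℝ) (hCstar : Cstar ∈ Set.Ioo (0 : ℝ) 1)
    (hroot : 4 * gphi Cstar ^ 2 - 4 * gPhi (-Cstar) + 1 = 0) :
    ∃ b ∈ Set.Ioo (0 : ℝ) Cstar, ∃ f g : ℝ → ℝ,
      Measurable f ∧ Measurable g ∧
      (∀ x, f x = 1 ∨ f x = -1) ∧ (∀ x, g x = 1 ∨ g x = -1) ∧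
      (∀ x : ℝ, x ≠ 0 → b ≤ |x| → f x = Real.sign x) ∧
      (∀ x : ℝ, x ≠ 0 → |x| < b → f x = -Real.sign x) ∧
      (∀ x : ℝ, Cstar < |x| → g x = f x) ∧
      (∀ x : ℝ, |x| ≤ Cstar → g x = -f x) ∧
      (∀ᵐ x ∂(ProbabilityTheory.gaussianReal 0 1),
        (Cstar ≤ x → f x = 1 ∧ g x = 1) ∧
        (x ≤ -Cstar → f x = -1 ∧ g x = -1) ∧
        (|x| < Cstar → g x = -f x)) ∧
      ∫ x : ℝ, x * f x * (if |x| ≤ Cstar then 1 else 0) * gphi x = 0 := by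
  classical
  obtain ⟨hC0, hC1⟩ := hCstar
  set c : ℝ := (Real.sqrt (2 * Real.pi))⁻¹ with hc
  set e : ℝ := Real.exp (-(Cstar ^ 2) / 2) with he
  have he0 : 0 < e := Real.exp_pos _
  have he1 : e < 1 := by
    rw [he, Real.exp_lt_one_iff]
    nlinarith
  set A : ℝ := (1 + e) / 2 with hA
  have hA0 : 0 < A := by positivity
  have hA1 : A < 1 := by rw [hA]; linarith
  have hlog : Real.log A < 0 := Real.log_neg hA0 hA1
  set b : ℝ := Real.sqrt (-2 * Real.log A) with hbdef
  have hb2 : b ^ 2 = -2 * Real.log A := Real.sq_sqrt (by linarith)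
  have hb0 : 0 < b := Real.sqrt_pos.mpr (by linarith)
  have hbC : b < Cstar := by
    have h1 : e < A := by rw [hA]; linarith
    have h2 : -(Cstar ^ 2) / 2 < Real.log A := by
      rw [← Real.log_exp (-(Cstar ^ 2) / 2), Real.log_lt_log_iff (Real.exp_pos _) hA0]
      exact h1
    have h3 : b ^ 2 < Cstar ^ 2 := by rw [hb2]; linarith
    nlinarith
  have hexpb : Real.exp (-(b ^ 2) / 2) = A := by
    rw [hb2, show -(-2 * Real.log A) / 2 = Real.log A by ring, Real.exp_log hA0]
  have hgb : gphi b = c * A := by rw [gphi, hexpb]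
  have hg0 : gphi 0 = c := by
    rw [gphi, show -((0:ℝ) ^ 2) / 2 = 0 by norm_num, Real.exp_zero, mul_one]
  have hgC : gphi Cstar = c * e := by rw [gphi]
  have hkey : 2 * gphi b = gphi 0 + gphi Cstar := by
    rw [hgb, hg0, hgC, hA]; ring
  -- define f and g
  set f : ℝ → ℝ := fun x =>
    if b ≤ |x| then (if 0 ≤ x then 1 else -1) else (if 0 ≤ x then -1 else 1) with hfdef
  set g : ℝ → ℝ := fun x => if |x| ≤ Cstar then -f x else f x with hgdef
  have hmf : Measurable f := by
    apply Measurable.ite (measurableSet_le measurable_const measurable_abs) <;>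
      exact Measurable.ite (measurableSet_le measurable_const measurable_id)
        measurable_const measurable_const
  have hmg : Measurable g :=
    Measurable.ite (measurableSet_le measurable_abs measurable_const) hmf.neg hmf
  have hfval : ∀ x, f x = 1 ∨ f x = -1 := by
    intro x; rw [hfdef]; dsimp only; split_ifs <;> simp
  have hgval : ∀ x, g x = 1 ∨ g x = -1 := by
    intro x; rw [hgdef]; dsimp only; split_ifs with h
    · rcases hfval x with h1 | h1 <;> rw [h1] <;> simp
    · exact hfval x
  have hfout : ∀ x : ℝ, x ≠ 0 → b ≤ |x| → f x = Real.sign x := by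
    intro x hx hbx
    rw [hfdef]; dsimp only; rw [if_pos hbx]
    rcases hx.lt_or_gt with h | h
    · rw [if_neg (not_le.mpr h), Real.sign_of_neg h]
    · rw [if_pos h.le, Real.sign_of_pos h]
  have hfin : ∀ x : ℝ, x ≠ 0 → |x| < b → f x = -Real.sign x := by
    intro x hx hbx
    rw [hfdef]; dsimp only; rw [if_neg (not_le.mpr hbx)]
    rcases hx.lt_or_gt with h | h
    · rw [if_neg (not_le.mpr h), Real.sign_of_neg h]; ring
    · rw [if_pos h.le, Real.sign_of_pos h]
  have hgout : ∀ x : ℝ, Cstar < |x| → g x = f x := by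
    intro x hx; rw [hgdef]; dsimp only; rw [if_neg (not_le.mpr hx)]
  have hgin : ∀ x : ℝ, |x| ≤ Cstar → g x = -f x := by
    intro x hx; rw [hgdef]; dsimp only; rw [if_pos hx]
  -- pointwise values of f on key regions
  have hfpos : ∀ x : ℝ, Cstar < x → f x = 1 := by
    intro x hx
    rw [hfdef]; dsimp only
    rw [if_pos (by rw [abs_of_pos (by linarith)]; linarith), if_pos (by linarith)]
  have hfneg : ∀ x : ℝ, x < -Cstar → f x = -1 := by
    intro x hx
    rw [hfdef]; dsimp only
    rw [if_pos (by rw [abs_of_neg (by linarith)]; linarith), if_neg (by push_neg; linarith)]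
  refine ⟨b, ⟨hb0, hbC⟩, f, g, hmf, hmg, hfval, hgval, hfout, hfin, hgout, hgin, ?_, ?_⟩
  · -- a.e. statement
    have hnull : (ProbabilityTheory.gaussianReal 0 1) {Cstar, -Cstar} = 0 := by
      refine ProbabilityTheory.gaussianReal_absolutelyContinuous 0 one_ne_zero ?_
      exact ((Set.finite_singleton _).insert _).measure_zero _
    filter_upwards [measure_eq_zero_iff_ae_notMem.mp hnull] with x hx
    simp only [Set.mem_insert_iff, Set.mem_singleton_iff, not_or] at hx
    refine ⟨fun h => ?_, fun h => ?_, fun h => hgin x h.le⟩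
    · have h' : Cstar < x := lt_of_le_of_ne h (Ne.symm hx.1)
      have hf1 := hfpos x h'
      exact ⟨hf1, by rw [hgout x (by rw [abs_of_pos (by linarith)]; exact h'), hf1]⟩
    · have h' : x < -Cstar := lt_of_le_of_ne h hx.2
      have hf1 := hfneg x h'
      exact ⟨hf1, by rw [hgout x (by rw [abs_of_neg (by linarith)]; linarith), hf1]⟩
  · -- the integral
    have hsplit : (fun x => x * f x * (if |x| ≤ Cstar then 1 else 0) * gphi x)
        = Set.indicator (Set.Icc (-Cstar) Cstar) (fun x => x * f x * gphi x) := by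
      funext x
      by_cases hx : |x| ≤ Cstar
      · rw [if_pos hx, Set.indicator_of_mem (by rw [Set.mem_Icc, ← abs_le]; exact hx)]
        ring
      · rw [if_neg hx, Set.indicator_of_notMem (by rw [Set.mem_Icc, ← abs_le]; exact hx)]
        ring
    rw [hsplit, integral_indicator measurableSet_Icc, integral_Icc_eq_integral_Ioc,
      ← intervalIntegral.integral_of_le (by linarith : -Cstar ≤ Cstar)]
    -- now an interval integral of H x := x * f x * gphi x
    set H : ℝ → ℝ := fun x => x * f x * gphi x with hHdef
    have hcont : Continuous fun x : ℝ => x * gphi x := by unfold gphi; fun_prop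
    have hcong : ∀ a₁ a₂ : ℝ, a₁ ≤ a₂ → ∀ s : ℝ,
        (∀ x ∈ Set.Ioc a₁ a₂, x ≠ b → x ≠ 0 → f x = s) →
        (∫ x in a₁..a₂, H x) = s * (gphi a₁ - gphi a₂) ∧
          IntervalIntegrable H volume a₁ a₂ := by
      intro a₁ a₂ hle s hs
      have hb' : ∀ᵐ x : ℝ ∂volume, x ≠ b := by
        rw [ae_iff]
        simp only [ne_eq, not_not, Set.setOf_eq_eq_singleton]
        exact measure_singleton b
      have h0' : ∀ᵐ x : ℝ ∂volume, x ≠ 0 := by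
        rw [ae_iff]
        simp only [ne_eq, not_not, Set.setOf_eq_eq_singleton]
        exact measure_singleton 0
      have hae' : ∀ᵐ x : ℝ ∂volume, x ∈ Set.Ioc a₁ a₂ → H x = s * (x * gphi x) := by
        filter_upwards [hb', h0'] with x hxb hx0 hx
        rw [hHdef]; dsimp only; rw [hs x hx hxb hx0]; ring
      have hae : H =ᵐ[volume.restrict (Set.uIoc a₁ a₂)] fun x => s * (x * gphi x) := by
        rw [Set.uIoc_of_le hle]
        exact (MeasureTheory.ae_restrict_iff' measurableSet_Ioc).mpr hae'
      constructor
      · calc (∫ x in a₁..a₂, H x) = ∫ x in a₁..a₂, s * (x * gphi x) :=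
              intervalIntegral.integral_congr_ae
                (by rw [Set.uIoc_of_le hle]; exact hae')
          _ = s * ∫ x in a₁..a₂, x * gphi x := by
              rw [intervalIntegral.integral_const_mul]
          _ = s * (gphi a₁ - gphi a₂) := by rw [gphi_int]
      · exact ((continuous_const.mul hcont).intervalIntegrable a₁ a₂).congr_ae hae.symm
    have h1 := hcong (-Cstar) (-b) (by linarith) (-1) (fun x hx _ _ => by
      rw [hfdef]; dsimp only
      have hx0 : x < 0 := lt_of_le_of_lt hx.2 (by linarith)
      rw [if_pos (by rw [abs_of_neg hx0]; linarith [hx.2]), if_neg (not_le.mpr hx0)])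
    have h2 := hcong (-b) 0 (by linarith) 1 (fun x hx hxb hx0 => by
      have h0 : x < 0 := lt_of_le_of_ne hx.2 hx0
      rw [hfdef]; dsimp only
      rw [if_neg (by rw [abs_of_neg h0]; push_neg; linarith [hx.1]), if_neg (not_le.mpr h0)])
    have h3 := hcong 0 b (by linarith) (-1) (fun x hx hxb _ => by
      rw [hfdef]; dsimp only
      have hx0 : 0 < x := hx.1
      rw [if_neg (by rw [abs_of_pos hx0]; push_neg; exact lt_of_le_of_ne hx.2 hxb),
        if_pos hx0.le])
    have h4 := hcong b Cstar (by linarith) 1 (fun x hx _ _ => by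
      rw [hfdef]; dsimp only
      have hx0 : 0 < x := lt_trans hb0 hx.1
      rw [if_pos (by rw [abs_of_pos hx0]; linarith [hx.1]), if_pos hx0.le])
    have hadd1 := intervalIntegral.integral_add_adjacent_intervals h1.2 h2.2
    have hadd2 := intervalIntegral.integral_add_adjacent_intervals h3.2 h4.2
    have hadd3 := intervalIntegral.integral_add_adjacent_intervals
      (h1.2.trans h2.2) (h3.2.trans h4.2)
    rw [← hadd3, ← hadd1, ← hadd2, h1.1, h2.1, h3.1, h4.1, gphi_even b, gphi_even Cstar]
    linarith [hkey]
end
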